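/- arXiv:2007.10117 — 3 statements merged into one kernel-verified Lean document; each statement's English description precedes it below -/
import Mathlib

section
/- Let ν > 0 and T > 0. Suppose H : ℝ → ℝ is positive on [0, T] and twice differentiable there, i.e. there are functions H' and H'' such that H has derivative H'(t) and H' has derivative H''(t) at every t ∈ [0, T]. Assume H(t)·H''(t) − (1 + ν)·(H'(t))² ≥ 0 for all t ∈ [0, T], H(0) > 0 and H'(0) > 0. Then T < H(0) / (ν · H'(0)). (Equivalently, a positive twice differentiable function satisfying this concavity-type differential inequality with positive initial data blows up no later than time H(0)/(ν H'(0)).) -/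
/-- Kalantarov–Ladyzhenskaya concavity blow-up lemma (Lemma 5.1): a positive twice
differentiable function `H` on `[0, T]` satisfying
`H·H'' − (1+ν)·(H')² ≥ 0` with `H(0) > 0` and `H'(0) > 0` forces
`T < H(0) / (ν · H'(0))`. -/
theorem blowup_concavity_lemma
    (ν T : ℝ) (hν : 0 < ν) (hT : 0 < T)
    (H H' H'' : ℝ → ℝ)
    (hpos : ∀ t ∈ Set.Icc (0 : ℝ) T, 0 < H t)
    (hd1 : ∀ t ∈ Set.Icc (0 : ℝ) T, HasDerivAt H (H' t) t)
    (hd2 : ∀ t ∈ Set.Icc (0 : ℝ) T, HasDerivAt H' (H'' t) t)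
    (hineq : ∀ t ∈ Set.Icc (0 : ℝ) T,
      0 ≤ H t * H'' t - (1 + ν) * (H' t) ^ 2)
    (hH0 : 0 < H 0) (hH'0 : 0 < H' 0) :
    T < H 0 / (ν * H' 0) := by
  set G : ℝ → ℝ := fun t => H t ^ (-ν) with hGdef
  set G' : ℝ → ℝ := fun t => H' t * (-ν) * H t ^ (-ν - 1) with hG'def
  set G'' : ℝ → ℝ := fun t =>
    H'' t * (-ν) * H t ^ (-ν - 1) +
      H' t * (-ν) * (H' t * (-ν - 1) * H t ^ (-ν - 1 - 1)) with hG''def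
  have hDG : ∀ t ∈ Set.Icc (0 : ℝ) T, HasDerivAt G (G' t) t := by
    intro t ht
    exact (hd1 t ht).rpow_const (Or.inl (hpos t ht).ne')
  have hDG' : ∀ t ∈ Set.Icc (0 : ℝ) T, HasDerivAt G' (G'' t) t := by
    intro t ht
    exact ((hd2 t ht).mul_const (-ν)).mul
      ((hd1 t ht).rpow_const (Or.inl (hpos t ht).ne'))
  have hG''nonpos : ∀ t ∈ Set.Icc (0 : ℝ) T, G'' t ≤ 0 := by
    intro t ht
    have hH := hpos t ht
    have hr : H t ^ (-ν - 1) = H t ^ (-ν - 1 - 1) * H t := by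
      rw [← Real.rpow_add_one hH.ne' (-ν - 1 - 1)]
      ring_nf
    have key : G'' t = -ν * H t ^ (-ν - 1 - 1) *
        (H t * H'' t - (1 + ν) * (H' t) ^ 2) := by
      simp only [hG''def]
      rw [hr]; ring
    rw [key]
    have h1 : 0 < H t ^ (-ν - 1 - 1) := Real.rpow_pos_of_pos hH _
    have h2 := hineq t ht
    nlinarith [mul_nonneg h1.le h2]
  have hGcont : ContinuousOn G (Set.Icc 0 T) :=
    fun t ht => (hDG t ht).continuousAt.continuousWithinAt
  obtain ⟨c, hc, hceq⟩ := exists_hasDerivAt_eq_slope G G' hT hGcont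
    (fun x hx => hDG x (Set.Ioo_subset_Icc_self hx))
  have hc0 : 0 < c := hc.1
  have hsub : Set.Icc (0 : ℝ) c ⊆ Set.Icc 0 T := Set.Icc_subset_Icc le_rfl hc.2.le
  have hG'cont : ContinuousOn G' (Set.Icc 0 c) :=
    fun t ht => (hDG' t (hsub ht)).continuousAt.continuousWithinAt
  obtain ⟨d, hd, hdeq⟩ := exists_hasDerivAt_eq_slope G' G'' hc0 hG'cont
    (fun x hx => hDG' x (hsub (Set.Ioo_subset_Icc_self hx)))
  have hd2' : G'' d ≤ 0 := hG''nonpos d (hsub (Set.Ioo_subset_Icc_self hd))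
  -- G' c ≤ G' 0
  have hmono : G' c ≤ G' 0 := by
    rw [hdeq] at hd2'
    have := (div_nonpos_iff.mp hd2')
    rcases this with ⟨h1, h2⟩ | ⟨h1, h2⟩
    · linarith
    · linarith [hc0]
  have hGT : 0 < G T :=
    Real.rpow_pos_of_pos (hpos T ⟨hT.le, le_rfl⟩) _
  have hslope : G T - G 0 = T * G' c := by
    field_simp at hceq
    rw [hceq, sub_zero, mul_div_assoc', mul_div_cancel_left₀ _ hT.ne']
  have hkey : 0 < G 0 + T * G' 0 := by
    have : T * G' c ≤ T * G' 0 := mul_le_mul_of_nonneg_left hmono hT.le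
    linarith
  -- unfold G 0, G' 0
  have hA : 0 < H 0 ^ (-ν - 1) := Real.rpow_pos_of_pos hH0 _
  have hG0 : G 0 = H 0 ^ (-ν - 1) * H 0 := by
    simp only [hGdef]
    rw [← Real.rpow_add_one hH0.ne' (-ν - 1)]
    ring_nf
  have hG'0 : G' 0 = H' 0 * (-ν) * H 0 ^ (-ν - 1) := rfl
  rw [hG0, hG'0] at hkey
  rw [lt_div_iff₀ (by positivity)]
  nlinarith [mul_pos hA (mul_pos hν hH'0)]
end

section
/- Let V be a real inner product space, let T > 0, and let u : ℝ → V be twice differentiable on [0, T] with derivative u' and second derivative u''. Let E₀ ∈ ℝ and suppose ⟪u(t), u''(t)⟫ ≥ ‖u'(t)‖² − E₀ for all t ∈ [0, T]. Let ν, b, t₀ > 0 and define, for t ∈ [0, T], κ₁(t) = 2b − 2E₀ − 4b(1+ν)(t + t₀), κ₂(t) = 4b(t + t₀)[(t + t₀) − (1 + ν)], φ(t) = 2b[−E₀ − (1 + 2ν)b](t + t₀)². Assume for all t ∈ [0, T]: (i) (1 + 2ν)b ≤ −E₀; (ii) 4b(1+ν)(t + t₀) ≤ 2b − 2E₀; (iii)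 4ν‖u(t)‖²‖u'(t)‖² ≤ κ₁(t)‖u(t)‖² + κ₂(t)‖u'(t)‖² + φ(t). Define H(t) = ‖u(t)‖² + b(t + t₀)². Then H is twice differentiable on [0, T] and H(t)·H''(t) − (1 + ν)·(H'(t))² ≥ 0 for all t ∈ [0, T]. -/
open scoped RealInnerProductSpace

/-- Core differential inequality in the proof of the blow-up theorem (Theorem 5.1):
under the stated energy inequality and the conditions (i)–(iii), the function
`H(t) = ‖u(t)‖² + b(t + t₀)²` is twice differentiable on `[0, T]` and satisfies
`H·H'' − (1+ν)·(H')² ≥ 0` there. -/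
theorem blowup_differential_inequality
    {V : Type*} [NormedAddCommGroup V] [InnerProductSpace ℝ V]
    (T : ℝ) (hT : 0 < T)
    (u u' u'' : ℝ → V)
    (hd1 : ∀ t ∈ Set.Icc (0 : ℝ) T, HasDerivAt u (u' t) t)
    (hd2 : ∀ t ∈ Set.Icc (0 : ℝ) T, HasDerivAt u' (u'' t) t)
    (E₀ : ℝ)
    (hE : ∀ t ∈ Set.Icc (0 : ℝ) T, ‖u' t‖ ^ 2 - E₀ ≤ ⟪u t, u'' t⟫)
    (ν b t₀ : ℝ) (hν : 0 < ν) (hb : 0 < b) (ht₀ : 0 < t₀)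
    (hi : ∀ t ∈ Set.Icc (0 : ℝ) T, (1 + 2 * ν) * b ≤ -E₀)
    (hii : ∀ t ∈ Set.Icc (0 : ℝ) T, 4 * b * (1 + ν) * (t + t₀) ≤ 2 * b - 2 * E₀)
    (hiii : ∀ t ∈ Set.Icc (0 : ℝ) T,
      4 * ν * ‖u t‖ ^ 2 * ‖u' t‖ ^ 2 ≤
        (2 * b - 2 * E₀ - 4 * b * (1 + ν) * (t + t₀)) * ‖u t‖ ^ 2 +
        (4 * b * (t + t₀) * ((t + t₀) - (1 + ν))) * ‖u' t‖ ^ 2 +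
        2 * b * (-E₀ - (1 + 2 * ν) * b) * (t + t₀) ^ 2) :
    ∃ H' H'' : ℝ → ℝ,
      (∀ t ∈ Set.Icc (0 : ℝ) T,
        HasDerivAt (fun s => ‖u s‖ ^ 2 + b * (s + t₀) ^ 2) (H' t) t) ∧
      (∀ t ∈ Set.Icc (0 : ℝ) T, HasDerivAt H' (H'' t) t) ∧
      (∀ t ∈ Set.Icc (0 : ℝ) T,
        0 ≤ (‖u t‖ ^ 2 + b * (t + t₀) ^ 2) * H'' t - (1 + ν) * (H' t) ^ 2) := by
  refine ⟨fun t => 2 * ⟪u t, u' t⟫ + 2 * b * (t + t₀),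
    fun t => 2 * ‖u' t‖ ^ 2 + 2 * ⟪u t, u'' t⟫ + 2 * b, ?_, ?_, ?_⟩
  · intro t ht
    have h1 : HasDerivAt (fun s => ⟪u s, u s⟫) (⟪u t, u' t⟫ + ⟪u' t, u t⟫) t :=
      (hd1 t ht).inner ℝ (hd1 t ht)
    have h2 : HasDerivAt (fun s : ℝ => b * (s + t₀) ^ 2) (2 * b * (t + t₀)) t := by
      have : HasDerivAt (fun s : ℝ => (s + t₀) ^ 2) (2 * (t + t₀)) t := by
        simpa using ((hasDerivAt_id t).add_const t₀).fun_pow 2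
      simpa [mul_comm, mul_assoc, mul_left_comm] using this.const_mul b
    have heq : (fun s => ‖u s‖ ^ 2 + b * (s + t₀) ^ 2)
        = fun s => ⟪u s, u s⟫ + b * (s + t₀) ^ 2 := by
      funext s; rw [real_inner_self_eq_norm_sq]
    have e : ⟪u t, u' t⟫ + ⟪u' t, u t⟫ + 2 * b * (t + t₀)
        = 2 * ⟪u t, u' t⟫ + 2 * b * (t + t₀) := by
      rw [real_inner_comm (u' t) (u t)]; ring
    have h4 := h1.add h2
    rw [e] at h4
    rw [heq]; exact h4
  · intro t ht
    have h1 : HasDerivAt (fun s => ⟪u s, u' s⟫) (⟪u t, u'' t⟫ + ⟪u' t, u' t⟫) t :=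
      (hd1 t ht).inner ℝ (hd2 t ht)
    have h2 : HasDerivAt (fun s : ℝ => 2 * b * (s + t₀)) (2 * b) t := by
      simpa using ((hasDerivAt_id t).add_const t₀).const_mul (2 * b)
    have h3 := (h1.const_mul 2).add h2
    have e : 2 * (⟪u t, u'' t⟫ + ⟪u' t, u' t⟫) + 2 * b
        = 2 * ‖u' t‖ ^ 2 + 2 * ⟪u t, u'' t⟫ + 2 * b := by
      rw [real_inner_self_eq_norm_sq]; ring
    rw [e] at h3
    exact h3
  · intro t ht
    dsimp only
    have hτ : 0 < t + t₀ := by have := ht.1; linarith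
    have hC := hE t ht
    have h3 := hiii t ht
    have hA0 : (0:ℝ) ≤ ‖u t‖ ^ 2 := by positivity
    have hB0 : (0:ℝ) ≤ ‖u' t‖ ^ 2 := by positivity
    have hCS : ⟪u t, u' t⟫ ^ 2 ≤ ‖u t‖ ^ 2 * ‖u' t‖ ^ 2 := by
      have h := abs_real_inner_le_norm (u t) (u' t)
      calc ⟪u t, u' t⟫ ^ 2 = |⟪u t, u' t⟫| ^ 2 := (sq_abs _).symm
        _ ≤ (‖u t‖ * ‖u' t‖) ^ 2 := by
            exact pow_le_pow_left₀ (abs_nonneg _) h 2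
        _ = ‖u t‖ ^ 2 * ‖u' t‖ ^ 2 := by ring
    have hAM : 2 * ⟪u t, u' t⟫ ≤ ‖u t‖ ^ 2 + ‖u' t‖ ^ 2 := by
      have h1 : ⟪u t, u' t⟫ ≤ ‖u t‖ * ‖u' t‖ := real_inner_le_norm _ _
      nlinarith [sq_nonneg (‖u t‖ - ‖u' t‖)]
    set A := ‖u t‖ ^ 2 with hA
    set B := ‖u' t‖ ^ 2 with hB
    set p := ⟪u t, u' t⟫ with hp
    set C := ⟪u t, u'' t⟫ with hCdef
    set τ := t + t₀ with hτdef
    have k1 : 0 ≤ A * (C - B + E₀) :=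
      mul_nonneg hA0 (by linarith)
    have k2 : 0 ≤ b * τ ^ 2 * (C - B + E₀) :=
      mul_nonneg (by positivity) (by linarith)
    have k3 : 0 ≤ A * B - p ^ 2 := by linarith
    have k4 : 0 ≤ ν * (A * B - p ^ 2) := mul_nonneg hν.le k3
    have k5 : 0 ≤ b * τ * (A + B - 2 * p) :=
      mul_nonneg (mul_nonneg hb.le hτ.le) (by linarith)
    have k6 : 0 ≤ ν * (b * τ * (A + B - 2 * p)) := mul_nonneg hν.le k5
    nlinarith [k1, k2, k3, k4, k5, k6, h3]
end

section
/- Let V be a real inner product space, let T > 0, and let u : ℝ → V be twice differentiable on [0, T] with derivative u' and second derivative u''. Let E₀ ∈ ℝ and suppose ⟪u(t), u''(t)⟫ ≥ ‖u'(t)‖² − E₀ for all t ∈ [0, T]. Let ν, b, t₀ > 0 and define, for t ∈ [0, T], κ₁(t) = 2b − 2E₀ − 4b(1+ν)(t + t₀), κ₂(t) = 4b(t + t₀)[(t + t₀) − (1 + ν)], φ(t) = 2b[−E₀ − (1 + 2ν)b](t + t₀)². Assume for all t ∈ [0, T]: (i) (1 + 2ν)b ≤ −E₀; (ii) 4b(1+ν)(t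 + t₀) ≤ 2b − 2E₀; (iii) 4ν‖u(t)‖²‖u'(t)‖² ≤ κ₁(t)‖u(t)‖² + κ₂(t)‖u'(t)‖² + φ(t). Assume moreover ⟪u(0), u'(0)⟫ + b·t₀ > 0. Then T < (‖u(0)‖² + b·t₀²) / (2ν(⟪u(0), u'(0)⟫ + b·t₀)). In particular, u cannot remain twice differentiable with these properties for all t ≥ 0: the solution blows up in finite time. -/
open scoped RealInnerProductSpace

set_option maxHeartbeats 1600000 in
/-- Abstract blow-up theorem (Theorem 5.1): under the energy inequality and the
conditions (i)–(iii), if moreover `⟪u(0), u'(0)⟫ + b·t₀ > 0`, then the solution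
cannot exist beyond time `(‖u(0)‖² + b·t₀²) / (2ν(⟪u(0), u'(0)⟫ + b·t₀))`. -/
theorem blowup_finite_time
    {V : Type*} [NormedAddCommGroup V] [InnerProductSpace ℝ V]
    (T : ℝ) (hT : 0 < T)
    (u u' u'' : ℝ → V)
    (hd1 : ∀ t ∈ Set.Icc (0 : ℝ) T, HasDerivAt u (u' t) t)
    (hd2 : ∀ t ∈ Set.Icc (0 : ℝ) T, HasDerivAt u' (u'' t) t)
    (E₀ : ℝ)
    (hE : ∀ t ∈ Set.Icc (0 : ℝ) T, ‖u' t‖ ^ 2 - E₀ ≤ ⟪u t, u'' t⟫)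
    (ν b t₀ : ℝ) (hν : 0 < ν) (hb : 0 < b) (ht₀ : 0 < t₀)
    (hi : ∀ t ∈ Set.Icc (0 : ℝ) T, (1 + 2 * ν) * b ≤ -E₀)
    (hii : ∀ t ∈ Set.Icc (0 : ℝ) T, 4 * b * (1 + ν) * (t + t₀) ≤ 2 * b - 2 * E₀)
    (hiii : ∀ t ∈ Set.Icc (0 : ℝ) T,
      4 * ν * ‖u t‖ ^ 2 * ‖u' t‖ ^ 2 ≤
        (2 * b - 2 * E₀ - 4 * b * (1 + ν) * (t + t₀)) * ‖u t‖ ^ 2 +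
        (4 * b * (t + t₀) * ((t + t₀) - (1 + ν))) * ‖u' t‖ ^ 2 +
        2 * b * (-E₀ - (1 + 2 * ν) * b) * (t + t₀) ^ 2)
    (hinit : 0 < ⟪u 0, u' 0⟫ + b * t₀) :
    T < (‖u 0‖ ^ 2 + b * t₀ ^ 2) / (2 * ν * (⟪u 0, u' 0⟫ + b * t₀)) := by
  set H : ℝ → ℝ := fun t => ‖u t‖ ^ 2 + b * (t + t₀) ^ 2 with hHdef
  set H1 : ℝ → ℝ := fun t => 2 * ⟪u t, u' t⟫ + 2 * b * (t + t₀) with hH1def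
  set H2 : ℝ → ℝ := fun t => 2 * ‖u' t‖ ^ 2 + 2 * ⟪u t, u'' t⟫ + 2 * b with hH2def
  have hHpos : ∀ t ∈ Set.Icc (0 : ℝ) T, 0 < H t := by
    intro t ht
    have hs : 0 < t + t₀ := by have := ht.1; linarith
    have : 0 < b * (t + t₀) ^ 2 := by positivity
    have hp : (0:ℝ) ≤ ‖u t‖ ^ 2 := sq_nonneg _
    show 0 < ‖u t‖ ^ 2 + b * (t + t₀) ^ 2
    linarith
  -- derivative of H
  have hH : ∀ t ∈ Set.Icc (0 : ℝ) T, HasDerivAt H (H1 t) t := by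
    intro t ht
    have h1 : HasDerivAt (fun s => ‖u s‖ ^ 2) (2 * ⟪u t, u' t⟫) t := (hd1 t ht).norm_sq
    have h2 : HasDerivAt (fun s : ℝ => b * (s + t₀) ^ 2)
        (b * ((2 : ℕ) * (t + t₀) ^ (2 - 1) * 1)) t :=
      (((hasDerivAt_id t).add_const t₀).pow 2).const_mul b
    have : HasDerivAt H _ t := h1.add h2
    convert this using 1
    show H1 t = _
    simp [hH1def]; ring
  -- derivative of H1
  have hH1 : ∀ t ∈ Set.Icc (0 : ℝ) T, HasDerivAt H1 (H2 t) t := by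
    intro t ht
    have h1 : HasDerivAt (fun s => ⟪u s, u' s⟫) (⟪u t, u'' t⟫ + ⟪u' t, u' t⟫) t :=
      (hd1 t ht).inner ℝ (hd2 t ht)
    have h1' := h1.const_mul 2
    have h2 : HasDerivAt (fun s : ℝ => 2 * b * (s + t₀)) (2 * b * 1) t :=
      ((hasDerivAt_id t).add_const t₀).const_mul (2 * b)
    have : HasDerivAt H1 _ t := h1'.add h2
    convert this using 1
    show H2 t = _
    simp [hH2def, real_inner_self_eq_norm_sq]; ring
  -- key concavity inequality
  have key : ∀ t ∈ Set.Icc (0 : ℝ) T, (1 + ν) * (H1 t) ^ 2 ≤ H t * H2 t := by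
    intro t ht
    have hs : 0 < t + t₀ := by have := ht.1; linarith
    have hbs : 0 < b * (t + t₀) := mul_pos hb hs
    have csa : ⟪u t, u' t⟫ ≤ ‖u t‖ * ‖u' t‖ :=
      le_of_abs_le (abs_real_inner_le_norm _ _)
    have csb : -(‖u t‖ * ‖u' t‖) ≤ ⟪u t, u' t⟫ := by
      have := le_of_abs_le (abs_real_inner_le_norm (u t) ((-1 : ℝ) • u' t))
      have h0 := abs_real_inner_le_norm (u t) (u' t)
      nlinarith [abs_nonneg ⟪u t, u' t⟫, le_abs_self ⟪u t, u' t⟫, neg_abs_le ⟪u t, u' t⟫]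
    have amg : 2 * (‖u t‖ * ‖u' t‖) ≤ ‖u t‖ ^ 2 + ‖u' t‖ ^ 2 := by
      nlinarith [sq_nonneg (‖u t‖ - ‖u' t‖)]
    have cs2 : ⟪u t, u' t⟫ ^ 2 ≤ ‖u t‖ ^ 2 * ‖u' t‖ ^ 2 := by nlinarith [csa, csb]
    -- bound (a + bs)^2
    have prod1 : 0 ≤ b * (t + t₀) * (‖u t‖ * ‖u' t‖ - ⟪u t, u' t⟫) :=
      mul_nonneg hbs.le (by linarith)
    have prod2 : 0 ≤ b * (t + t₀) * (‖u t‖ ^ 2 + ‖u' t‖ ^ 2 - 2 * (‖u t‖ * ‖u' t‖)) :=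
      mul_nonneg hbs.le (by linarith)
    have h1 : (⟪u t, u' t⟫ + b * (t + t₀)) ^ 2 ≤
        ‖u t‖ ^ 2 * ‖u' t‖ ^ 2 + b * (t + t₀) * (‖u t‖ ^ 2 + ‖u' t‖ ^ 2)
          + b ^ 2 * (t + t₀) ^ 2 := by nlinarith [cs2, prod1, prod2]
    have h1' : 4 * (1 + ν) * ((⟪u t, u' t⟫ + b * (t + t₀)) ^ 2) ≤
        4 * (1 + ν) * (‖u t‖ ^ 2 * ‖u' t‖ ^ 2 + b * (t + t₀) * (‖u t‖ ^ 2 + ‖u' t‖ ^ 2)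
          + b ^ 2 * (t + t₀) ^ 2) :=
      mul_le_mul_of_nonneg_left h1 (by positivity)
    have hiii' := hiii t ht
    have h4 : (1 + ν) * (H1 t) ^ 2 ≤
        (‖u t‖ ^ 2 + b * (t + t₀) ^ 2) * (4 * ‖u' t‖ ^ 2 + 2 * b - 2 * E₀) := by
      have hH1t : H1 t = 2 * ⟪u t, u' t⟫ + 2 * b * (t + t₀) := rfl
      rw [hH1t]
      nlinarith [h1', hiii']
    have h3 : 4 * ‖u' t‖ ^ 2 + 2 * b - 2 * E₀ ≤ H2 t := by
      have := hE t ht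
      show _ ≤ 2 * ‖u' t‖ ^ 2 + 2 * ⟪u t, u'' t⟫ + 2 * b
      linarith
    have h5 := mul_le_mul_of_nonneg_left h3 (hHpos t ht).le
    have hHt : H t = ‖u t‖ ^ 2 + b * (t + t₀) ^ 2 := rfl
    rw [hHt] at h5 ⊢
    linarith
  -- the auxiliary function G = H ^ (-ν)
  set G : ℝ → ℝ := fun t => H t ^ (-ν) with hGdef
  set G1 : ℝ → ℝ := fun t => H1 t * (-ν) * H t ^ (-ν - 1) with hG1def
  set G2 : ℝ → ℝ := fun t =>
    H2 t * (-ν) * H t ^ (-ν - 1) +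
      H1 t * (-ν) * (H1 t * (-ν - 1) * H t ^ (-ν - 1 - 1)) with hG2def
  have hG : ∀ t ∈ Set.Icc (0 : ℝ) T, HasDerivAt G (G1 t) t := fun t ht =>
    (hH t ht).rpow_const (Or.inl (hHpos t ht).ne')
  have hG1 : ∀ t ∈ Set.Icc (0 : ℝ) T, HasDerivAt G1 (G2 t) t := by
    intro t ht
    exact ((hH1 t ht).mul_const (-ν)).mul ((hH t ht).rpow_const (Or.inl (hHpos t ht).ne'))
  have hG2le : ∀ t ∈ Set.Icc (0 : ℝ) T, G2 t ≤ 0 := by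
    intro t ht
    have hp := hHpos t ht
    have hr : H t ^ (-ν - 1) = H t ^ (-ν - 1 - 1) * H t := by
      have h := Real.rpow_add_one hp.ne' (-ν - 1 - 1)
      rw [show (-ν - 1 - 1 + 1 : ℝ) = -ν - 1 by ring] at h
      exact h
    have hx : 0 < H t ^ (-ν - 1 - 1) := Real.rpow_pos_of_pos hp _
    have hbr : 0 ≤ H t * H2 t - (1 + ν) * (H1 t) ^ 2 := by linarith [key t ht]
    have : G2 t = -(ν * H t ^ (-ν - 1 - 1) * (H t * H2 t - (1 + ν) * (H1 t) ^ 2)) := by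
      rw [hG2def]; simp only; rw [hr]; ring
    rw [this]
    exact neg_nonpos.2 (mul_nonneg (mul_nonneg hν.le hx.le) hbr)
  -- mean value theorem twice
  have hGcont : ContinuousOn G (Set.Icc 0 T) := fun x hx =>
    (hG x hx).continuousAt.continuousWithinAt
  obtain ⟨c, hc, hslope⟩ := exists_hasDerivAt_eq_slope G G1 hT hGcont
    (fun x hx => hG x ⟨hx.1.le, hx.2.le⟩)
  have hcIcc : c ∈ Set.Icc (0 : ℝ) T := ⟨hc.1.le, hc.2.le⟩
  have hsub : Set.Icc (0 : ℝ) c ⊆ Set.Icc (0 : ℝ) T :=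
    Set.Icc_subset_Icc le_rfl hc.2.le
  have hG1cont : ContinuousOn G1 (Set.Icc 0 c) := fun x hx =>
    (hG1 x (hsub hx)).continuousAt.continuousWithinAt
  obtain ⟨d, hd, hslope2⟩ := exists_hasDerivAt_eq_slope G1 G2 hc.1 hG1cont
    (fun x hx => hG1 x (hsub ⟨hx.1.le, hx.2.le⟩))
  have hdIcc : d ∈ Set.Icc (0 : ℝ) T := hsub ⟨hd.1.le, hd.2.le⟩
  have hmono : G1 c ≤ G1 0 := by
    have h1 : (G1 c - G1 0) / (c - 0) ≤ 0 := hslope2 ▸ hG2le d hdIcc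
    rw [sub_zero, div_nonpos_iff] at h1
    rcases h1 with ⟨h, h'⟩ | ⟨h, h'⟩
    · linarith [hc.1]
    · linarith
  have hGT : G T ≤ G 0 + T * G1 0 := by
    have h1 : G1 c = (G T - G 0) / (T - 0) := hslope
    rw [sub_zero] at h1
    have h2 : G T - G 0 = T * G1 c := by
      rw [h1]; field_simp
    nlinarith [hmono, hT]
  have hGTpos : 0 < G T :=
    Real.rpow_pos_of_pos (hHpos T ⟨hT.le, le_rfl⟩) _
  -- evaluate at 0
  have h0Icc : (0 : ℝ) ∈ Set.Icc (0 : ℝ) T := ⟨le_rfl, hT.le⟩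
  have hH0 : H 0 = ‖u 0‖ ^ 2 + b * t₀ ^ 2 := by simp [hHdef]
  have hH10 : H1 0 = 2 * (⟪u 0, u' 0⟫ + b * t₀) := by simp [hH1def]; ring
  have hH0pos : 0 < H 0 := hHpos 0 h0Icc
  have hH10pos : 0 < H1 0 := by rw [hH10]; linarith
  have hxp : 0 < H 0 ^ (-ν - 1) := Real.rpow_pos_of_pos hH0pos _
  have hG10 : G1 0 = H1 0 * (-ν) * H 0 ^ (-ν - 1) := rfl
  have hG10neg : G1 0 < 0 := by
    rw [hG10]
    have : 0 < H1 0 * ν * H 0 ^ (-ν - 1) := by positivity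
    nlinarith
  have hTlt : T < G 0 / (-G1 0) := by
    rw [lt_div_iff₀ (by linarith : 0 < -G1 0)]
    have h := lt_of_lt_of_le hGTpos hGT
    linarith
  have hG0 : G 0 = H 0 ^ (-ν - 1) * H 0 := by
    show H 0 ^ (-ν) = _
    have h := Real.rpow_add_one hH0pos.ne' (-ν - 1)
    rw [show (-ν - 1 + 1 : ℝ) = -ν by ring] at h
    exact h
  have hneg : -G1 0 = ν * H1 0 * H 0 ^ (-ν - 1) := by rw [hG10]; ring
  have hdpos1 : 0 < ν * H1 0 * H 0 ^ (-ν - 1) :=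
    mul_pos (mul_pos hν hH10pos) hxp
  have hdpos2 : 0 < 2 * ν * (⟪u 0, u' 0⟫ + b * t₀) := by
    have : 0 < 2 * ν := by linarith
    exact mul_pos this hinit
  have hfinal : G 0 / (-G1 0) =
      (‖u 0‖ ^ 2 + b * t₀ ^ 2) / (2 * ν * (⟪u 0, u' 0⟫ + b * t₀)) := by
    rw [hG0, hneg, ← hH0, div_eq_div_iff hdpos1.ne' hdpos2.ne', hH10]
    ring
  rwa [hfinal] at hTlt
end
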